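/- Let R : ℝ → ℝ be a smooth function with R and R' integrable and decaying at infinity, and Z : ℝ → ℝ smooth with Z' ∈ L¹. Then ∫_ℝ (R² + 2RZ)' sgn(R) dx = 0, where sgn denotes the sign function. -/
import Mathlib


open MeasureTheory Filter

/-- One-sided (right) derivative of `|R|`. -/
noncomputable def auxB (R R' : ℝ → ℝ) (x : ℝ) : ℝ :=
  if R x = 0 then |R' x| else Real.sign (R x) * R' x

/-- The everywhere right-derivative of the antiderivative `(R + 2Z)·|R|`. -/
noncomputable def auxPhi (R R' Z Z' : ℝ → ℝ) (x : ℝ) : ℝ :=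
  (R' x + 2 * Z' x) * |R x| + (R x + 2 * Z x) * auxB R R' x

lemma measurable_realSign : Measurable Real.sign := by
  have h : Real.sign = fun r : ℝ => if r < 0 then (-1 : ℝ) else if 0 < r then 1 else 0 := rfl
  rw [h]
  exact Measurable.ite measurableSet_Iio measurable_const
    (Measurable.ite measurableSet_Ioi measurable_const measurable_const)

lemma abs_realSign_le (r : ℝ) : |Real.sign r| ≤ 1 := by
  rcases lt_trichotomy r 0 with h | h | h
  · simp [Real.sign_of_neg h]
  · simp [h, Real.sign_zero]
  · simp [Real.sign_of_pos h]

lemma hasDerivWithinAt_abs_comp (R R' : ℝ → ℝ) (hR : ∀ x, HasDerivAt R (R' x) x) (x : ℝ) :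
    HasDerivWithinAt (fun y => |R y|) (auxB R R' x) (Set.Ioi x) x := by
  by_cases h : R x = 0
  · rw [auxB, if_pos h, hasDerivWithinAt_iff_tendsto_slope]
    have hx : x ∉ Set.Ioi x := fun hx => lt_irrefl x hx
    rw [Set.diff_singleton_eq_self hx]
    have h1 : Tendsto (slope R x) (nhdsWithin x (Set.Ioi x)) (nhds (R' x)) :=
      (hasDerivAt_iff_tendsto_slope.1 (hR x)).mono_left
        (nhdsWithin_mono x fun y hy => by simpa using (ne_of_gt hy))
    refine Tendsto.congr' ?_ h1.abs
    filter_upwards [self_mem_nhdsWithin] with y hy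
    have hyx : 0 < y - x := sub_pos.2 hy
    rw [slope_def_field, slope_def_field, h, sub_zero, abs_zero, sub_zero, abs_div, abs_of_pos hyx]
  · rw [auxB, if_neg h]
    rcases lt_or_gt_of_ne h with hneg | hpos
    · have hcont : ContinuousAt R x := (hR x).continuousAt
      have hd : HasDerivAt (fun y => |R y|) (-R' x) x := by
        refine HasDerivAt.congr_of_eventuallyEq (hR x).neg ?_
        filter_upwards [hcont.preimage_mem_nhds (Iio_mem_nhds hneg)] with y hy
        simp [abs_of_neg (show R y < 0 from hy)]
      rw [Real.sign_of_neg hneg]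
      simpa [neg_one_mul] using hd.hasDerivWithinAt
    · have hcont : ContinuousAt R x := (hR x).continuousAt
      have hd : HasDerivAt (fun y => |R y|) (R' x) x := by
        refine HasDerivAt.congr_of_eventuallyEq (hR x) ?_
        filter_upwards [hcont.preimage_mem_nhds (Ioi_mem_nhds hpos)] with y hy
        simp [abs_of_pos (show 0 < R y from hy)]
      rw [Real.sign_of_pos hpos]
      simpa [one_mul] using hd.hasDerivWithinAt

/-- The cancellation identity `∫ (R² + 2RZ)' sgn(R) dx = 0` used in the
`L¹`-contraction argument. -/
theorem cancellation_identity (R R' Z Z' : ℝ → ℝ)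
    (hR : ∀ x, HasDerivAt R (R' x) x) (hZ : ∀ x, HasDerivAt Z (Z' x) x)
    (hRint : Integrable R) (hR'int : Integrable R') (hZ'int : Integrable Z')
    (hRtop : Tendsto R atTop (nhds 0)) (hRbot : Tendsto R atBot (nhds 0))
    (hZbdd : ∃ M, ∀ x, |Z x| ≤ M) :
    (∫ x, (2 * R x * R' x + 2 * (R' x * Z x + R x * Z' x)) * Real.sign (R x)) = 0 := by
  obtain ⟨M, hM⟩ := hZbdd
  have hM0 : (0 : ℝ) ≤ M := (abs_nonneg _).trans (hM 0)
  have hRc : Continuous R := continuous_iff_continuousAt.2 fun x => (hR x).continuousAt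
  have hZc : Continuous Z := continuous_iff_continuousAt.2 fun x => (hZ x).continuousAt
  -- `R` is globally bounded
  have hRbd : ∃ C, (0 : ℝ) ≤ C ∧ ∀ x, |R x| ≤ C := by
    have h1 : ∀ᶠ x in atTop, |R x| ≤ 1 := by
      have hball : ∀ᶠ y in nhds (0 : ℝ), |y| ≤ 1 := by
        filter_upwards [Metric.ball_mem_nhds (0 : ℝ) one_pos] with y hy
        simpa [Real.dist_eq] using le_of_lt (Metric.mem_ball.1 hy)
      exact hRtop.eventually hball
    have h2 : ∀ᶠ x in atBot, |R x| ≤ 1 := by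
      have hball : ∀ᶠ y in nhds (0 : ℝ), |y| ≤ 1 := by
        filter_upwards [Metric.ball_mem_nhds (0 : ℝ) one_pos] with y hy
        simpa [Real.dist_eq] using le_of_lt (Metric.mem_ball.1 hy)
      exact hRbot.eventually hball
    obtain ⟨b, hb⟩ := eventually_atTop.1 h1
    obtain ⟨a, ha⟩ := eventually_atBot.1 h2
    obtain ⟨C, hC⟩ := (isCompact_Icc (a := a) (b := b)).exists_bound_of_continuousOn
      hRc.continuousOn
    refine ⟨max C 1, le_trans zero_le_one (le_max_right _ _), fun x => ?_⟩
    rcases le_total x a with hxa | hxa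
    · exact le_trans (ha x hxa) (le_max_right _ _)
    · rcases le_total b x with hbx | hbx
      · exact le_trans (hb x hbx) (le_max_right _ _)
      · exact le_trans (by simpa [Real.norm_eq_abs] using hC x ⟨hxa, hbx⟩) (le_max_left _ _)
  obtain ⟨C, hC0, hC⟩ := hRbd
  -- the integrand is integrable
  have haesm : AEStronglyMeasurable
      (fun x => (2 * R x * R' x + 2 * (R' x * Z x + R x * Z' x)) * Real.sign (R x)) volume := by
    have h1 : AEStronglyMeasurable (fun x => 2 * R x * R' x + 2 * (R' x * Z x + R x * Z' x))
        volume := by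
      exact (((continuous_const.mul hRc).aestronglyMeasurable.mul hR'int.1).add
        (((hR'int.1.mul hZc.aestronglyMeasurable).add
          (hRc.aestronglyMeasurable.mul hZ'int.1)).const_mul 2))
    exact h1.mul ((measurable_realSign.comp hRc.measurable).aestronglyMeasurable)
  have hgint : Integrable
      (fun x => (2 * R x * R' x + 2 * (R' x * Z x + R x * Z' x)) * Real.sign (R x)) := by
    refine Integrable.mono'
      (g := fun x => (2 * C + 2 * M) * |R' x| + 2 * C * |Z' x|)
      ((hR'int.abs.const_mul _).add (hZ'int.abs.const_mul _)) haesm ?_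
    refine Filter.Eventually.of_forall fun x => ?_
    have t1 : |2 * R x * R' x| ≤ 2 * C * |R' x| := by
      rw [abs_mul, abs_mul, abs_two]
      have := hC x
      gcongr
    have t2 : |R' x * Z x| ≤ |R' x| * M := by
      rw [abs_mul]
      have := hM x
      gcongr
    have t3 : |R x * Z' x| ≤ C * |Z' x| := by
      rw [abs_mul]
      have := hC x
      gcongr
    have hs := abs_realSign_le (R x)
    rw [Real.norm_eq_abs, abs_mul]
    calc |2 * R x * R' x + 2 * (R' x * Z x + R x * Z' x)| * |Real.sign (R x)|
        ≤ |2 * R x * R' x + 2 * (R' x * Z x + R x * Z' x)| * 1 := by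
          gcongr
      _ = |2 * R x * R' x + 2 * (R' x * Z x + R x * Z' x)| := mul_one _
      _ ≤ |2 * R x * R' x| + |2 * (R' x * Z x + R x * Z' x)| := abs_add_le _ _
      _ ≤ |2 * R x * R' x| + 2 * (|R' x * Z x| + |R x * Z' x|) := by
          have h22 : |2 * (R' x * Z x + R x * Z' x)| ≤ 2 * (|R' x * Z x| + |R x * Z' x|) := by
            rw [abs_mul, abs_two]
            exact mul_le_mul_of_nonneg_left (abs_add_le _ _) (by norm_num)
          linarith
      _ ≤ (2 * C + 2 * M) * |R' x| + 2 * C * |Z' x| := by nlinarith [abs_nonneg (R' x)]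
  -- the exceptional set is countable
  have hScount : Set.Countable {x | R x = 0 ∧ R' x ≠ 0} := by
    set S : Set ℝ := {x | R x = 0 ∧ R' x ≠ 0} with hS
    have key : ∀ x ∈ S, ({x} : Set ℝ) ∈ nhdsWithin x S := by
      intro x hx
      have hev : ∀ᶠ y in nhdsWithin x {x}ᶜ, R y ≠ R x := (hR x).eventually_ne hx.2
      rw [eventually_nhdsWithin_iff] at hev
      obtain ⟨U, hUp, hUopen, hxU⟩ := eventually_nhds_iff.1 hev
      refine mem_nhdsWithin.2 ⟨U, hUopen, hxU, ?_⟩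
      rintro y ⟨hyU, hyS⟩
      by_contra hy
      have hyx : y ≠ x := by simpa using hy
      exact (hUp y hyU (by simpa using hyx)) (by rw [hyS.1, hx.1])
    obtain ⟨t, hts, htc, hcover⟩ := TopologicalSpace.countable_cover_nhdsWithin key
    refine htc.mono ?_
    intro x hx
    have := hcover hx
    simpa using this
  -- a.e. identification of the integrand with `auxPhi`
  have hae : (fun x => (2 * R x * R' x + 2 * (R' x * Z x + R x * Z' x)) * Real.sign (R x))
      =ᵐ[volume] auxPhi R R' Z Z' := by
    filter_upwards [hScount.ae_notMem volume] with x hx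
    by_cases h0 : R x = 0
    · have h1 : R' x = 0 := by
        by_contra h1
        exact hx ⟨h0, h1⟩
      simp [auxPhi, auxB, h0, h1, Real.sign_zero]
    · rcases lt_or_gt_of_ne h0 with hneg | hpos
      · simp only [auxPhi, auxB, if_neg h0, Real.sign_of_neg hneg, abs_of_neg hneg]
        ring
      · simp only [auxPhi, auxB, if_neg h0, Real.sign_of_pos hpos, abs_of_pos hpos]
        ring
  have hφint : Integrable (auxPhi R R' Z Z') := hgint.congr hae
  -- the antiderivative
  set F : ℝ → ℝ := fun x => (R x + 2 * Z x) * |R x| with hFdef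
  have hFc : Continuous F := (hRc.add (continuous_const.mul hZc)).mul hRc.abs
  have hFderiv : ∀ y : ℝ, HasDerivWithinAt F (auxPhi R R' Z Z' y) (Set.Ioi y) y := by
    intro y
    exact ((hR y).add ((hZ y).const_mul 2)).hasDerivWithinAt.mul
      (hasDerivWithinAt_abs_comp R R' hR y)
  have hFTC : ∀ a b : ℝ, (∫ y in a..b, auxPhi R R' Z Z' y) = F b - F a := by
    intro a b
    exact intervalIntegral.integral_eq_sub_of_hasDeriv_right hFc.continuousOn
      (fun y _ => hFderiv y) (hφint.intervalIntegrable)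
  -- limits of `F` at infinity
  have hFbound : ∀ x, ‖F x‖ ≤ (C + 2 * M) * |R x| := by
    intro x
    rw [Real.norm_eq_abs, hFdef]
    simp only
    rw [abs_mul, abs_abs]
    have h1 : |R x + 2 * Z x| ≤ C + 2 * M := by
      calc |R x + 2 * Z x| ≤ |R x| + |2 * Z x| := abs_add_le _ _
        _ ≤ C + 2 * M := by
            rw [abs_mul, abs_two]
            have := hC x
            have := hM x
            gcongr
    gcongr
  have hlim : Tendsto (fun x : ℝ => (C + 2 * M) * |R x|) atTop (nhds 0) := by
    have := (hRtop.abs).const_mul (C + 2 * M)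
    simpa using this
  have hlim' : Tendsto (fun x : ℝ => (C + 2 * M) * |R x|) atBot (nhds 0) := by
    have := (hRbot.abs).const_mul (C + 2 * M)
    simpa using this
  have hFtop : Tendsto F atTop (nhds 0) := squeeze_zero_norm hFbound hlim
  have hFbot : Tendsto F atBot (nhds 0) := squeeze_zero_norm hFbound hlim'
  -- conclude
  have h2 : Tendsto (fun n : ℝ => ∫ y in (-n)..n, auxPhi R R' Z Z' y) atTop
      (nhds (∫ y, auxPhi R R' Z Z' y)) :=
    intervalIntegral_tendsto_integral hφint tendsto_neg_atTop_atBot tendsto_id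
  have h3 : Tendsto (fun n : ℝ => F n - F (-n)) atTop (nhds 0) := by
    have := hFtop.sub (hFbot.comp tendsto_neg_atTop_atBot)
    simpa using this
  have hzero : (∫ y, auxPhi R R' Z Z' y) = 0 := by
    refine tendsto_nhds_unique ?_ h3
    exact h2.congr fun n => hFTC (-n) n
  rw [integral_congr_ae hae, hzero]
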